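/- Let (X,d,W) be a UCW-hyperbolic space with monotone modulus of uniform convexity η, C ⊆ X a nonempty convex subset, T : C → C nonexpansive, (λ_n),(s_n) sequences in [0,1], (x_n) the Ishikawa iteration starting with x ∈ C, y_n := (1−s_n)x_n ⊕ s_n T x_n, and p a fixed point of T. Let n ∈ ℕ and γ, β, β̃, a > 0 satisfy γ ≤ d(x_n,p), d(x_n,p) ≤ β, d(x_n,p) ≤ β̃ and a ≤ d(x_n, Ty_n). Then d(x_{n+1}, p) ≤ d(x_n, p) − 2γλ_n(1−λ_n)·η(β̃, a/β). -/

import Mathlib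

open Set Filter Metric Bornology Function

/-- A `W`-hyperbolic space structure on a metric space `X` (Kohlenbach).
`W x y l` denotes `(1-l)x ⊕ l y`. -/
structure WHyp (X : Type*) [MetricSpace X] where
  W : X → X → ℝ → X
  W1 : ∀ (x y z : X), ∀ l ∈ Set.Icc (0:ℝ) 1,
    dist z (W x y l) ≤ (1 - l) * dist z x + l * dist z y
  W2 : ∀ (x y : X), ∀ l ∈ Set.Icc (0:ℝ) 1, ∀ l' ∈ Set.Icc (0:ℝ) 1,
    dist (W x y l) (W x y l') = |l - l'| * dist x y
  W3 : ∀ (x y : X), ∀ l ∈ Set.Icc (0:ℝ) 1, W x y l = W y x (1 - l)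
  W4 : ∀ (x y z w : X), ∀ l ∈ Set.Icc (0:ℝ) 1,
    dist (W x z l) (W y w l) ≤ (1 - l) * dist x y + l * dist z w

/-- `η` is a modulus of uniform convexity for the `W`-hyperbolic space `H`. -/
def WHyp.UnifConvex {X : Type*} [MetricSpace X] (H : WHyp X) (η : ℝ → ℝ → ℝ) : Prop :=
  (∀ r ε : ℝ, 0 < r → ε ∈ Set.Ioc (0:ℝ) 2 → η r ε ∈ Set.Ioc (0:ℝ) 1) ∧
  (∀ (r ε : ℝ) (a x y : X), 0 < r → ε ∈ Set.Ioc (0:ℝ) 2 →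
    dist x a ≤ r → dist y a ≤ r → ε * r ≤ dist x y →
    dist (H.W x y (1/2)) a ≤ (1 - η r ε) * r)

/-- A modulus of uniform convexity is monotone if it decreases in `r` for fixed `ε`. -/
def MonotoneModulus (η : ℝ → ℝ → ℝ) : Prop :=
  ∀ r s ε : ℝ, 0 < r → r ≤ s → ε ∈ Set.Ioc (0:ℝ) 2 → η s ε ≤ η r ε

/-- A subset `C` is convex in the `W`-hyperbolic space `H`. -/
def WHyp.ConvexSet {X : Type*} [MetricSpace X] (H : WHyp X) (C : Set X) : Prop :=
  ∀ x ∈ C, ∀ y ∈ C, ∀ l ∈ Set.Icc (0:ℝ) 1, H.W x y l ∈ C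

/-- The Ishikawa iteration: `x₀ = x`,
`x_{n+1} = (1-λ_n)x_n ⊕ λ_n T((1-s_n)x_n ⊕ s_n T x_n)`. -/
def WHyp.ishSeq {X : Type*} [MetricSpace X] (H : WHyp X) (T : X → X) (l s : ℕ → ℝ)
    (x : X) : ℕ → X
  | 0 => x
  | n + 1 =>
      H.W (H.ishSeq T l s x n)
        (T (H.W (H.ishSeq T l s x n) (T (H.ishSeq T l s x n)) (s n))) (l n)

/-!
Uniform convexity makes metric segments unique, so the `W`-path from `x` to `y` can be
reparametrised: `(1-λ)x ⊕ λy = (1-2λ)x ⊕ 2λm` with `m` the midpoint of `x, y`. Combined with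
the midpoint estimate this yields Leuştean's bound
`d((1-λ)x ⊕ λy, a) ≤ (1 - 2λ(1-λ)η(r,ε))r` whenever `x, y` lie in the ball of radius `r`
around `a` and `d(x,y) ≥ εr`. Applied with `a = p`, `r = d(x_n,p)`, `x = x_n`, `y = T y_n`
(which lies in that ball because `T` is nonexpansive and fixes `p`), and with the monotonicity
of `η` to pass from `r` to `β̃`, it gives the theorem.
-/

namespace WHyp

variable {X : Type*} [MetricSpace X] (H : WHyp X)

lemma W_zero (x y : X) : H.W x y 0 = x := by
  simpa [eq_comm] using H.W1 x y x 0 (by norm_num)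

lemma W_one (x y : X) : H.W x y 1 = y := by
  rw [H.W3 x y 1 (by norm_num), sub_self, H.W_zero]

lemma dist_W_left (x y : X) {l : ℝ} (hl : l ∈ Icc (0:ℝ) 1) :
    dist x (H.W x y l) = l * dist x y := by
  simpa [H.W_zero, abs_of_nonneg hl.1, dist_comm] using H.W2 x y l hl 0 (by norm_num)

lemma dist_W_right (x y : X) {l : ℝ} (hl : l ∈ Icc (0:ℝ) 1) :
    dist (H.W x y l) y = (1 - l) * dist x y := by
  have h := H.W2 x y l hl 1 (by norm_num)
  rw [H.W_one, abs_of_nonpos (by linarith [hl.2]), neg_sub] at h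
  exact h

lemma dist_W_le_of_le {x y a : X} {r l : ℝ} (hl : l ∈ Icc (0:ℝ) 1)
    (hxa : dist x a ≤ r) (hya : dist y a ≤ r) : dist (H.W x y l) a ≤ r := by
  have h := H.W1 x y a l hl
  rw [dist_comm a, dist_comm a, dist_comm a] at h
  nlinarith [hl.1, hl.2]

lemma ishSeq_mem {C : Set X} (hC : H.ConvexSet C) {T : X → X} (hT : MapsTo T C C)
    {l s : ℕ → ℝ} (hl : ∀ n, l n ∈ Icc (0:ℝ) 1) (hs : ∀ n, s n ∈ Icc (0:ℝ) 1)
    {x : X} (hx : x ∈ C) (n : ℕ) : H.ishSeq T l s x n ∈ C := by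
  induction n with
  | zero => exact hx
  | succ k ih => exact hC _ ih _ (hT (hC _ ih _ (hT ih) _ (hs k))) _ (hl k)

lemma dist_T_W_self_le {C : Set X} (hC : H.ConvexSet C) {T : X → X} (hT : MapsTo T C C)
    (hTne : ∀ x ∈ C, ∀ y ∈ C, dist (T x) (T y) ≤ dist x y) {p : X} (hp : p ∈ C)
    (hfix : T p = p) {z : X} (hz : z ∈ C) {s : ℝ} (hs : s ∈ Icc (0:ℝ) 1) :
    dist (T (H.W z (T z) s)) p ≤ dist z p := by
  have hTle : ∀ w ∈ C, dist (T w) p ≤ dist w p := fun w hw => by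
    simpa [hfix] using hTne w hw p hp
  exact (hTle _ (hC _ hz _ (hT hz) _ hs)).trans (H.dist_W_le_of_le hs le_rfl (hTle z hz))

namespace UnifConvex

variable {H} {η : ℝ → ℝ → ℝ}

lemma dist_midpoint_lt (hU : H.UnifConvex η) {a x y : X} {r : ℝ} (hxa : dist x a ≤ r)
    (hya : dist y a ≤ r) (hxy : x ≠ y) : dist (H.W x y (1/2)) a < r := by
  have hd : 0 < dist x y := dist_pos.mpr hxy
  have hd2r : dist x y ≤ 2 * r := by
    linarith [dist_triangle x a y, dist_comm a y]
  have hr : 0 < r := by linarith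
  have hε : dist x y / r ∈ Ioc (0:ℝ) 2 :=
    ⟨div_pos hd hr, (div_le_iff₀ hr).mpr hd2r⟩
  have hmid := hU.2 r _ a x y hr hε hxa hya (div_mul_cancel₀ _ hr.ne').le
  nlinarith [(hU.1 r _ hr hε).1]

lemma eq_of_dist_add_eq (hU : H.UnifConvex η) {x y z u : X}
    (hz : dist x z + dist z y = dist x y) (hu : dist x u + dist u y = dist x y)
    (hzu : dist x z = dist x u) : z = u := by
  by_contra hne
  have hx := hU.dist_midpoint_lt (dist_comm z x).le (by rw [dist_comm, hzu]) hne
  have hy := hU.dist_midpoint_lt le_rfl (by linarith) hne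
  linarith [dist_triangle x (H.W z u (1/2)) y, dist_comm x (H.W z u (1/2))]

lemma W_W_left (hU : H.UnifConvex η) (x y : X) {t μ : ℝ} (ht : t ∈ Icc (0:ℝ) 1)
    (hμ : μ ∈ Icc (0:ℝ) 1) :
    H.W x (H.W x y μ) t = H.W x y (t * μ) := by
  have htμ : t * μ ∈ Icc (0:ℝ) 1 :=
    ⟨mul_nonneg ht.1 hμ.1, mul_le_one₀ ht.2 hμ.1 hμ.2⟩
  set z := H.W x (H.W x y μ) t
  have hxz : dist x z = t * μ * dist x y := by
    rw [H.dist_W_left _ _ ht, H.dist_W_left _ _ hμ, mul_assoc]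
  have hzy : dist z y ≤ (1 - t * μ) * dist x y := by
    calc dist z y ≤ dist z (H.W x y μ) + dist (H.W x y μ) y := dist_triangle _ _ _
      _ = (1 - t) * (μ * dist x y) + (1 - μ) * dist x y := by
        rw [H.dist_W_right _ _ ht, H.dist_W_left _ _ hμ, H.dist_W_right _ _ hμ]
      _ = (1 - t * μ) * dist x y := by ring
  refine hU.eq_of_dist_add_eq (x := x) (y := y) ?_ ?_ ?_
  · linarith [dist_triangle x z y]
  · rw [H.dist_W_left _ _ htμ, H.dist_W_right _ _ htμ]; ring
  · rw [hxz, H.dist_W_left _ _ htμ]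

lemma dist_W_le_of_le_half (hU : H.UnifConvex η) {r ε : ℝ} {a x y : X} (hr : 0 < r)
    (hε : ε ∈ Ioc (0:ℝ) 2) (hxa : dist x a ≤ r) (hya : dist y a ≤ r) (hxy : ε * r ≤ dist x y)
    {l : ℝ} (hl0 : 0 ≤ l) (hl : l ≤ 1/2) :
    dist (H.W x y l) a ≤ (1 - 2 * l * η r ε) * r := by
  have h2l : 2 * l ∈ Icc (0:ℝ) 1 := ⟨by linarith, by linarith⟩
  have hmid := hU.2 r ε a x y hr hε hxa hya hxy
  have hW := H.W1 x (H.W x y (1/2)) a (2 * l) h2l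
  have hseg : H.W x (H.W x y (1/2)) (2 * l) = H.W x y l := by
    rw [hU.W_W_left x y h2l (by norm_num)]; ring_nf
  rw [← hseg, dist_comm]
  rw [dist_comm a x, dist_comm a (H.W x y _)] at hW
  nlinarith [mul_le_mul_of_nonneg_left hxa h2l.1, mul_le_mul_of_nonneg_left hmid h2l.1]

/-- Leuştean's convexity lemma for `UCW`-hyperbolic spaces. -/
lemma dist_W_le (hU : H.UnifConvex η) {r ε : ℝ} {a x y : X} (hr : 0 < r)
    (hε : ε ∈ Ioc (0:ℝ) 2) (hxa : dist x a ≤ r) (hya : dist y a ≤ r) (hxy : ε * r ≤ dist x y)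
    {l : ℝ} (hl : l ∈ Icc (0:ℝ) 1) :
    dist (H.W x y l) a ≤ (1 - 2 * l * (1 - l) * η r ε) * r := by
  have hη := (hU.1 r ε hr hε).1
  rcases le_or_gt l (1/2) with hl2 | hl2
  · have h := hU.dist_W_le_of_le_half hr hε hxa hya hxy hl.1 hl2
    nlinarith [mul_nonneg (mul_nonneg (mul_nonneg hl.1 hl.1) hη.le) hr.le]
  · have h := hU.dist_W_le_of_le_half hr hε hya hxa (by rwa [dist_comm])
      (l := 1 - l) (by linarith [hl.2]) (by linarith)
    rw [H.W3 x y l hl]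
    nlinarith [mul_nonneg (mul_nonneg (mul_nonneg (sub_nonneg.2 hl.2) (sub_nonneg.2 hl.2))
      hη.le) hr.le]

end UnifConvex

end WHyp

theorem stmt14_general {X : Type*} [MetricSpace X] (H : WHyp X)
    (η : ℝ → ℝ → ℝ) (hU : H.UnifConvex η) (hmon : MonotoneModulus η)
    (C : Set X) (hCconv : H.ConvexSet C)
    (T : X → X) (hT : Set.MapsTo T C C)
    (hTne : ∀ x ∈ C, ∀ y ∈ C, dist (T x) (T y) ≤ dist x y)
    (l s : ℕ → ℝ) (hl : ∀ n, l n ∈ Set.Icc (0:ℝ) 1) (hs : ∀ n, s n ∈ Set.Icc (0:ℝ) 1)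
    (x : X) (hx : x ∈ C)
    (xs : ℕ → X) (hxs : xs = H.ishSeq T l s x)
    (ys : ℕ → X) (hys : ∀ n, ys n = H.W (xs n) (T (xs n)) (s n))
    (p : X) (hp : p ∈ C) (hfix : T p = p)
    (n : ℕ) (γ β βt a : ℝ) (hγ : 0 < γ) (hβ : 0 < β) (ha : 0 < a)
    (h1 : γ ≤ dist (xs n) p) (h2 : dist (xs n) p ≤ β) (h3 : dist (xs n) p ≤ βt)
    (h4 : a ≤ dist (xs n) (T (ys n))) :
    dist (xs (n + 1)) p ≤ dist (xs n) p - 2 * γ * l n * (1 - l n) * η βt (a / β) := by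
  set r := dist (xs n) p
  have hr : 0 < r := hγ.trans_le h1
  have hxn : xs n ∈ C := hxs ▸ H.ishSeq_mem hCconv hT hl hs hx n
  have hTy : dist (T (ys n)) p ≤ r :=
    hys n ▸ H.dist_T_W_self_le hCconv hT hTne hp hfix hxn (hs n)
  have hε : a / β ∈ Ioc (0:ℝ) 2 := by
    refine ⟨div_pos ha hβ, (div_le_iff₀ hβ).2 ?_⟩
    linarith [dist_triangle_right (xs n) (T (ys n)) p]
  have hεr : a / β * r ≤ dist (xs n) (T (ys n)) :=
    calc a / β * r ≤ a / β * β := by gcongr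
      _ = a := div_mul_cancel₀ a hβ.ne'
      _ ≤ _ := h4
  have hnext : xs (n + 1) = H.W (xs n) (T (ys n)) (l n) := by rw [hys, hxs]; rfl
  have hstep := hU.dist_W_le hr hε le_rfl hTy hεr (hl n)
  have hηr := (hU.1 r _ hr hε).1
  have hη : γ * η βt (a / β) ≤ r * η r (a / β) :=
    calc γ * η βt (a / β) ≤ γ * η r (a / β) := by gcongr; exact hmon r βt _ hr h3 hε
      _ ≤ r * η r (a / β) := by gcongr
  have hl1 : 0 ≤ l n * (1 - l n) := mul_nonneg (hl n).1 (sub_nonneg.2 (hl n).2)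
  rw [hnext]
  nlinarith [mul_le_mul_of_nonneg_left hη hl1]

theorem stmt14 {X : Type*} [MetricSpace X] (H : WHyp X)
    (η : ℝ → ℝ → ℝ) (hU : H.UnifConvex η) (hmon : MonotoneModulus η)
    (C : Set X) (hCne : C.Nonempty) (hCconv : H.ConvexSet C)
    (T : X → X) (hT : Set.MapsTo T C C)
    (hTne : ∀ x ∈ C, ∀ y ∈ C, dist (T x) (T y) ≤ dist x y)
    (l s : ℕ → ℝ) (hl : ∀ n, l n ∈ Set.Icc (0:ℝ) 1) (hs : ∀ n, s n ∈ Set.Icc (0:ℝ) 1)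
    (x : X) (hx : x ∈ C)
    (xs : ℕ → X) (hxs : xs = H.ishSeq T l s x)
    (ys : ℕ → X) (hys : ∀ n, ys n = H.W (xs n) (T (xs n)) (s n))
    (p : X) (hp : p ∈ C) (hfix : T p = p)
    (n : ℕ) (γ β βt a : ℝ) (hγ : 0 < γ) (hβ : 0 < β) (hβt : 0 < βt) (ha : 0 < a)
    (h1 : γ ≤ dist (xs n) p) (h2 : dist (xs n) p ≤ β) (h3 : dist (xs n) p ≤ βt)
    (h4 : a ≤ dist (xs n) (T (ys n))) :
    dist (xs (n + 1)) p ≤ dist (xs n) p - 2 * γ * l n * (1 - l n) * η βt (a / β) :=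
  stmt14_general H η hU hmon C hCconv T hT hTne l s hl hs x hx xs hxs ys hys p hp hfix n γ β βt a hγ
    hβ ha h1 h2 h3 h4
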